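/- Let d ≥ 2, L > 0, T > 0, and let ω ⊆ Ω_L be measurable. Suppose that for each n ∈ ℕ there exist t_n ∈ ℝ and the parallelepiped Q_n := (0,2πL)^{d−1} × (t_n − n/2, t_n + n/2) ⊆ Ω_L such that |ω ∩ Q_n| < (2πL)^{d−1} n^{−1}, and set x_n := (πL,…,πL,t_n). Then ∫_ω exp(−‖x − x_n‖₂²/(2T)) dx → 0 as n → ∞. -/

import Mathlib

/-!
Split `ω` along the slab `S_n = {x | |x_d - t_n| < n/2}`. On `ω ∩ S_n` the Gaussian is at most `1`
and the set has measure `O(1/n)`. Off the slab `‖x - x_n‖ ≥ n/2`, and halving the exponent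
`e^{-s²/2T} = e^{-s²/4T} e^{-s²/4T} ≤ e^{-n²/16T} e^{-s²/4T}` bounds that part by
`e^{-n²/16T}` times the integral of a Gaussian.
-/

open MeasureTheory Filter

/-- The infinite strip `Ω_L = (0,2πL)^{d-1} × ℝ ⊆ ℝ^d`. -/
def OmegaL (d : ℕ) (L : ℝ) : Set (EuclideanSpace ℝ (Fin d)) :=
  {x | ∀ j : Fin d, (j : ℕ) < d - 1 → x j ∈ Set.Ioo 0 (2 * Real.pi * L)}

open Topology Set

section Gaussian

variable {V : Type*} [NormedAddCommGroup V] [InnerProductSpace ℝ V] [FiniteDimensional ℝ V]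
  [MeasurableSpace V] [BorelSpace V]

lemma integrable_exp_neg_sq_norm_div {c : ℝ} (hc : 0 < c) :
    Integrable fun v : V => Real.exp (-‖v‖ ^ 2 / c) := by
  have hb : 0 < 1 / c := by positivity
  have hpos : 0 < ∫ v : V, Real.exp (-(1 / c) * ‖v‖ ^ 2) := by
    rw [GaussianFourier.integral_rexp_neg_mul_sq_norm hb]
    positivity
  refine (Integrable.of_integral_ne_zero hpos.ne').congr (.of_forall fun v => ?_)
  simp only [neg_mul, one_div, inv_mul_eq_div, neg_div]

lemma exp_neg_sq_div_le_mul_exp {c r s : ℝ} (hc : 0 < c) (hr : 0 ≤ r) (hrs : r ≤ s) :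
    Real.exp (-s ^ 2 / c) ≤ Real.exp (-r ^ 2 / (2 * c)) * Real.exp (-s ^ 2 / (2 * c)) := by
  rw [← Real.exp_add, Real.exp_le_exp]
  have : r ^ 2 ≤ s ^ 2 := pow_le_pow_left₀ hr hrs 2
  field_simp
  nlinarith

lemma setIntegral_exp_neg_sq_norm_sub_tail_le {c r : ℝ} (hc : 0 < c) (hr : 0 ≤ r) (a : V) :
    ∫ x in {x | r ≤ ‖x - a‖}, Real.exp (-‖x - a‖ ^ 2 / c) ≤
      Real.exp (-r ^ 2 / (2 * c)) * ∫ v : V, Real.exp (-‖v‖ ^ 2 / (2 * c)) := by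
  have hfar : MeasurableSet {x : V | r ≤ ‖x - a‖} :=
    measurableSet_le measurable_const (by fun_prop)
  have hdom : Integrable fun x : V =>
      Real.exp (-r ^ 2 / (2 * c)) * Real.exp (-‖x - a‖ ^ 2 / (2 * c)) :=
    ((integrable_exp_neg_sq_norm_div (by positivity)).comp_sub_right a).const_mul _
  calc ∫ x in {x | r ≤ ‖x - a‖}, Real.exp (-‖x - a‖ ^ 2 / c)
      ≤ ∫ x in {x | r ≤ ‖x - a‖},
          Real.exp (-r ^ 2 / (2 * c)) * Real.exp (-‖x - a‖ ^ 2 / (2 * c)) :=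
        setIntegral_mono_on ((integrable_exp_neg_sq_norm_div hc).comp_sub_right a).integrableOn
          hdom.integrableOn hfar fun x hx => exp_neg_sq_div_le_mul_exp hc hr hx
    _ ≤ ∫ x, Real.exp (-r ^ 2 / (2 * c)) * Real.exp (-‖x - a‖ ^ 2 / (2 * c)) :=
        setIntegral_le_integral hdom (.of_forall fun x => by positivity)
    _ = Real.exp (-r ^ 2 / (2 * c)) * ∫ v : V, Real.exp (-‖v‖ ^ 2 / (2 * c)) := by
        rw [integral_const_mul,
          integral_sub_right_eq_self (fun v : V => Real.exp (-‖v‖ ^ 2 / (2 * c))) a]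

lemma setIntegral_exp_neg_sq_norm_sub_le {c r : ℝ} (hc : 0 < c) (hr : 0 ≤ r)
    {ω S : Set V} (hS : MeasurableSet S) (hω : volume (ω ∩ S) ≠ ⊤) {a : V}
    (hfar : ∀ x ∉ S, r ≤ ‖x - a‖) :
    ∫ x in ω, Real.exp (-‖x - a‖ ^ 2 / c) ≤
      volume.real (ω ∩ S) +
        Real.exp (-r ^ 2 / (2 * c)) * ∫ v : V, Real.exp (-‖v‖ ^ 2 / (2 * c)) := by
  have hint : Integrable fun x : V => Real.exp (-‖x - a‖ ^ 2 / c) :=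
    (integrable_exp_neg_sq_norm_div hc).comp_sub_right a
  have hnear : ∫ x in ω ∩ S, Real.exp (-‖x - a‖ ^ 2 / c) ≤ volume.real (ω ∩ S) := by
    have hle : ∀ x ∈ ω ∩ S, ‖Real.exp (-‖x - a‖ ^ 2 / c)‖ ≤ 1 := fun x _ => by
      rw [Real.norm_of_nonneg (Real.exp_nonneg _), Real.exp_le_one_iff]
      exact div_nonpos_of_nonpos_of_nonneg (neg_nonpos.mpr (by positivity)) hc.le
    simpa using (le_abs_self _).trans
      (norm_setIntegral_le_of_norm_le_const hω.lt_top hle)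
  have hoff : ∫ x in ω \ S, Real.exp (-‖x - a‖ ^ 2 / c) ≤
      ∫ x in {x | r ≤ ‖x - a‖}, Real.exp (-‖x - a‖ ^ 2 / c) :=
    setIntegral_mono_set hint.integrableOn (.of_forall fun x => by positivity)
      (.of_forall fun x hx => hfar x hx.2)
  rw [← integral_inter_add_sdiff hS hint.integrableOn]
  linarith [setIntegral_exp_neg_sq_norm_sub_tail_le hc hr a]

theorem tendsto_setIntegral_exp_neg_sq_norm_sub_nhds_zero {c : ℝ} (hc : 0 < c) {ω : Set V}
    {S : ℕ → Set V} (hS : ∀ n, MeasurableSet (S n)) {a : ℕ → V} {r : ℕ → ℝ}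
    (hr : Tendsto r atTop atTop) (hfar : ∀ n, ∀ x ∉ S n, r n ≤ ‖x - a n‖)
    (hvol : Tendsto (fun n => volume (ω ∩ S n)) atTop (𝓝 0)) :
    Tendsto (fun n => ∫ x in ω, Real.exp (-‖x - a n‖ ^ 2 / c)) atTop (𝓝 0) := by
  have hvol_real : Tendsto (fun n => volume.real (ω ∩ S n)) atTop (𝓝 0) :=
    ENNReal.toReal_zero ▸ (ENNReal.tendsto_toReal ENNReal.zero_ne_top).comp hvol
  have hexp : Tendsto (fun n => Real.exp (-r n ^ 2 / (2 * c))) atTop (𝓝 0) := by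
    refine Real.tendsto_exp_atBot.comp (Tendsto.atBot_div_const (by positivity) ?_)
    exact tendsto_neg_atTop_atBot.comp ((tendsto_pow_atTop two_ne_zero).comp hr)
  have hbound : Tendsto (fun n => volume.real (ω ∩ S n) + Real.exp (-r n ^ 2 / (2 * c)) *
      ∫ v : V, Real.exp (-‖v‖ ^ 2 / (2 * c))) atTop (𝓝 0) := by
    simpa using hvol_real.add (hexp.mul_const _)
  refine squeeze_zero' (.of_forall fun n => setIntegral_nonneg_of_ae ?_) ?_ hbound
  · exact .of_forall fun x => by positivity
  filter_upwards [hr.eventually_ge_atTop 0,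
    hvol.eventually (gt_mem_nhds ENNReal.zero_lt_top)] with n hrn hfin
  exact setIntegral_exp_neg_sq_norm_sub_le hc hrn (hS n) hfin.ne (hfar n)

end Gaussian

/-- if `|ω ∩ Q_n| < (2πL)^{d-1}/n` for the boxes
`Q_n = (0,2πL)^{d-1} × (t_n - n/2, t_n + n/2)` with centres `x_n = (πL,…,πL,t_n)`, then
`∫_ω exp(-‖x - x_n‖²/(2T)) dx → 0` as `n → ∞`. -/
theorem stmt_8 (d : ℕ) (hd : 2 ≤ d) (L T : ℝ) (hT : 0 < T)
    (ω : Set (EuclideanSpace ℝ (Fin d))) (hωΩ : ω ⊆ OmegaL d L)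
    (t : ℕ → ℝ)
    (hQ : ∀ n : ℕ, 0 < n →
      volume (ω ∩ (OmegaL d L ∩
          {x : EuclideanSpace ℝ (Fin d) |
            x ⟨d - 1, by omega⟩ ∈ Set.Ioo (t n - n / 2) (t n + n / 2)})) <
        ENNReal.ofReal ((2 * Real.pi * L) ^ (d - 1) / n))
    (xn : ℕ → EuclideanSpace ℝ (Fin d))
    (hxn : ∀ (n : ℕ) (j : Fin d),
      xn n j = if (j : ℕ) < d - 1 then Real.pi * L else t n) :
    Tendsto (fun n : ℕ => ∫ x in ω, Real.exp (-‖x - xn n‖ ^ 2 / (2 * T)))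
      atTop (nhds 0) := by
  set e : Fin d := ⟨d - 1, by omega⟩
  set S : ℕ → Set (EuclideanSpace ℝ (Fin d)) :=
    fun n => {x | x e ∈ Ioo (t n - n / 2) (t n + n / 2)}
  have hS : ∀ n, MeasurableSet (S n) := fun n =>
    measurableSet_Ioo.preimage (EuclideanSpace.proj e).continuous.measurable
  have hfar : ∀ n, ∀ x ∉ S n, (n : ℝ) / 2 ≤ ‖x - xn n‖ := fun n x hx => by
    have hxe : xn n e = t n := by simp [hxn, e]
    rw [mem_ofPred_eq, ← Real.ball_eq_Ioo, Metric.mem_ball, not_lt, Real.dist_eq] at hx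
    calc (n : ℝ) / 2 ≤ |x e - t n| := hx
      _ = ‖(x - xn n) e‖ := by simp [hxe]
      _ ≤ ‖x - xn n‖ := PiLp.norm_apply_le _ e
  have hvol : Tendsto (fun n => volume (ω ∩ S n)) atTop (𝓝 0) := by
    have hsmall := ENNReal.tendsto_ofReal
      (tendsto_const_div_atTop_nhds_zero_nat ((2 * Real.pi * L) ^ (d - 1)))
    rw [ENNReal.ofReal_zero] at hsmall
    refine tendsto_of_tendsto_of_tendsto_of_le_of_le' tendsto_const_nhds hsmall
      (.of_forall fun n => zero_le) ?_
    filter_upwards [eventually_gt_atTop 0] with n hn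
    have hslab : ω ∩ (OmegaL d L ∩ S n) = ω ∩ S n := by
      rw [← inter_assoc, inter_eq_left.mpr hωΩ]
    exact (hslab ▸ hQ n hn).le
  exact tendsto_setIntegral_exp_neg_sq_norm_sub_nhds_zero (by positivity) hS
    (tendsto_natCast_atTop_atTop.atTop_div_const two_pos) hfar hvol
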